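/- arXiv:1803.04751 — 2 statements merged into one kernel-verified Lean document; each statement's English description precedes it below -/
import Mathlib

section
/- Suppose 𝒢 and 𝒟 are nonempty compact convex sets, the generation cost G : ℝ^𝒯 → ℝ is convex and continuous on 𝒢, the battery cost D : ℝ^𝒯 × ℝ^𝒯 → ℝ is convex and continuous on 𝒟, and the scenario set 𝒫 = {p^{(1)}, …, p^{(m)}} is finite and nonempty with every p^{(s)} ≥ 0. Then the prosumption cost function F(x) := max_{p ∈ 𝒫} F′(x;p) (where each inner infimum F′(x;p) is attained for x ∈ 𝒳) is a convex real-valued function on the convex set 𝒳 := {x : ℱ(x;p) ≠ ∅ for every p ∈ 𝒫}. -/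
/-- With nonempty compact convex `Gset`, `Dset`, convex continuous costs `G`, `D`,
and a finite nonempty scenario set `{p 1, …, p m}` of nonnegative scenarios, the worst-case
prosumption cost `F x = max_{s} F' x (p s)` (with `F' x p = inf {G g + D δ : (g,δ,q) ∈ ℱ(x;p)}`)
is a convex real-valued function on the convex set `𝒳 = {x | ℱ(x; p s) ≠ ∅ for all s}`. -/
theorem prosumption_cost_function_convex
    {T B : Type*} [Fintype T] [Fintype B] [Nonempty T] [Nonempty B]
    (l : T → ℝ) (ηin ηout : ℝ)
    (hηin : ηin ∈ Set.Ioc (0 : ℝ) 1) (hηout : ηout ∈ Set.Ioc (0 : ℝ) 1)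
    (Gset : Set (T → ℝ)) (Dset : Set ((T → ℝ) × (T → ℝ)))
    (hGne : Gset.Nonempty) (hGcpt : IsCompact Gset) (hGconv : Convex ℝ Gset)
    (hDne : Dset.Nonempty) (hDcpt : IsCompact Dset) (hDconv : Convex ℝ Dset)
    (G : (T → ℝ) → ℝ) (D : (T → ℝ) × (T → ℝ) → ℝ)
    (hGconvOn : ConvexOn ℝ Gset G) (hGcont : ContinuousOn G Gset)
    (hDconvOn : ConvexOn ℝ Dset D) (hDcont : ContinuousOn D Dset)
    (m : ℕ) (hm : 0 < m) (p : Fin m → (T → ℝ)) (hp : ∀ s t, 0 ≤ p s t)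
    (Feas : (T → B → ℝ) → (T → ℝ) → Set ((T → ℝ) × ((T → ℝ) × (T → ℝ)) × (T → ℝ)))
    (hFeas : ∀ x pp, Feas x pp =
      {gdq : (T → ℝ) × ((T → ℝ) × (T → ℝ)) × (T → ℝ) |
        gdq.1 ∈ Gset ∧ gdq.2.1 ∈ Dset ∧ (∀ t, 0 ≤ gdq.2.2 t ∧ gdq.2.2 t ≤ pp t) ∧
        ∀ t, (∑ i, x t i) =
          gdq.1 t - l t + pp t - gdq.2.2 t + ηout * gdq.2.1.2 t - (1 / ηin) * gdq.2.1.1 t})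
    (F' : (T → B → ℝ) → (T → ℝ) → ℝ)
    (hF' : ∀ x pp, F' x pp = sInf ((fun gdq => G gdq.1 + D gdq.2.1) '' Feas x pp))
    (X : Set (T → B → ℝ)) (hX : X = {x | ∀ s, (Feas x (p s)).Nonempty})
    (F : (T → B → ℝ) → ℝ) (hF : ∀ x, F x = ⨆ s : Fin m, F' x (p s)) :
    ConvexOn ℝ X F := by
  -- lower bounds for G on Gset and D on Dset
  obtain ⟨CG, hCG⟩ : BddBelow (G '' Gset) := (hGcpt.image_of_continuousOn hGcont).bddBelow
  obtain ⟨CD, hCD⟩ : BddBelow (D '' Dset) := (hDcpt.image_of_continuousOn hDcont).bddBelow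
  have hCG' : ∀ g ∈ Gset, CG ≤ G g := fun g hg => hCG ⟨g, hg, rfl⟩
  have hCD' : ∀ d ∈ Dset, CD ≤ D d := fun d hd => hCD ⟨d, hd, rfl⟩
  -- combination lemma
  have combo : ∀ (x y : T → B → ℝ) (pp : T → ℝ) (a b : ℝ), 0 ≤ a → 0 ≤ b → a + b = 1 →
      ∀ g1 ∈ Feas x pp, ∀ g2 ∈ Feas y pp, a • g1 + b • g2 ∈ Feas (a • x + b • y) pp := by
    intro x y pp a b ha hb hab g1 hg1 g2 hg2
    rw [hFeas] at hg1 hg2 ⊢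
    obtain ⟨hg1G, hg1D, hg1Q, hg1E⟩ := hg1
    obtain ⟨hg2G, hg2D, hg2Q, hg2E⟩ := hg2
    refine ⟨hGconv hg1G hg2G ha hb hab, hDconv hg1D hg2D ha hb hab, ?_, ?_⟩
    · intro t
      have h1 := hg1Q t; have h2 := hg2Q t
      have u1 : a * g1.2.2 t ≤ a * pp t := mul_le_mul_of_nonneg_left h1.2 ha
      have u2 : b * g2.2.2 t ≤ b * pp t := mul_le_mul_of_nonneg_left h2.2 hb
      have l1 : 0 ≤ a * g1.2.2 t := mul_nonneg ha h1.1
      have l2 : 0 ≤ b * g2.2.2 t := mul_nonneg hb h2.1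
      simp only [Prod.snd_add, Prod.smul_snd, Pi.add_apply, Pi.smul_apply, smul_eq_mul]
      constructor
      · linarith
      · nlinarith
    · intro t
      have h1 := hg1E t; have h2 := hg2E t
      have hsum : (∑ i, (a • x + b • y) t i) = a * (∑ i, x t i) + b * (∑ i, y t i) := by
        simp [Finset.mul_sum, ← Finset.sum_add_distrib]
      simp only [Prod.fst_add, Prod.snd_add, Prod.smul_fst, Prod.smul_snd, Pi.add_apply,
        Pi.smul_apply, smul_eq_mul] at hsum ⊢
      rw [hsum]
      linear_combination a * h1 + b * h2 + (pp t - l t) * hab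
  -- bddBelow of cost images
  have hbdd : ∀ (x : T → B → ℝ) (pp : T → ℝ),
      BddBelow ((fun gdq => G gdq.1 + D gdq.2.1) '' Feas x pp) := by
    intro x pp
    refine ⟨CG + CD, ?_⟩
    rintro _ ⟨gdq, hgdq, rfl⟩
    rw [hFeas] at hgdq
    exact add_le_add (hCG' _ hgdq.1) (hCD' _ hgdq.2.1)
  -- convexity of X
  have hXconv : Convex ℝ X := by
    rw [hX]
    intro x hx y hy a b ha hb hab
    intro s
    obtain ⟨g1, hg1⟩ := hx s
    obtain ⟨g2, hg2⟩ := hy s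
    exact ⟨a • g1 + b • g2, combo x y (p s) a b ha hb hab g1 hg1 g2 hg2⟩
  -- key inequality for F'
  have hF'conv : ∀ x ∈ X, ∀ y ∈ X, ∀ (s : Fin m) (a b : ℝ), 0 ≤ a → 0 ≤ b → a + b = 1 →
      F' (a • x + b • y) (p s) ≤ a * F' x (p s) + b * F' y (p s) := by
    intro x hx y hy s a b ha hb hab
    rw [hX] at hx hy
    rw [hF', hF', hF']
    set S0 := (fun gdq => G gdq.1 + D gdq.2.1) '' Feas (a • x + b • y) (p s) with hS0
    set S1 := (fun gdq => G gdq.1 + D gdq.2.1) '' Feas x (p s) with hS1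
    set S2 := (fun gdq => G gdq.1 + D gdq.2.1) '' Feas y (p s) with hS2
    have hS1ne : S1.Nonempty := (hx s).image _
    have hS2ne : S2.Nonempty := (hy s).image _
    refine le_of_forall_pos_le_add ?_
    intro ε hε
    obtain ⟨c1, hc1S, hc1⟩ := exists_lt_of_csInf_lt hS1ne
      (lt_add_of_pos_right (sInf S1) hε)
    obtain ⟨c2, hc2S, hc2⟩ := exists_lt_of_csInf_lt hS2ne
      (lt_add_of_pos_right (sInf S2) hε)
    obtain ⟨g1, hg1, rfl⟩ := hc1S
    obtain ⟨g2, hg2, rfl⟩ := hc2S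
    have hmem := combo x y (p s) a b ha hb hab g1 hg1 g2 hg2
    have hle : sInf S0 ≤ G (a • g1 + b • g2).1 + D (a • g1 + b • g2).2.1 :=
      csInf_le (hbdd _ _) ⟨_, hmem, rfl⟩
    have hg1' := (hFeas x (p s)) ▸ hg1
    have hg2' := (hFeas y (p s)) ▸ hg2
    have hGle : G (a • g1 + b • g2).1 ≤ a * G g1.1 + b * G g2.1 := by
      have := hGconvOn.2 hg1'.1 hg2'.1 ha hb hab
      simpa [smul_eq_mul] using this
    have hDle : D (a • g1 + b • g2).2.1 ≤ a * D g1.2.1 + b * D g2.2.1 := by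
      have := hDconvOn.2 hg1'.2.1 hg2'.2.1 ha hb hab
      simpa [smul_eq_mul] using this
    simp only at hc1 hc2
    have t1 : a * (G g1.1 + D g1.2.1) ≤ a * (sInf S1 + ε) := mul_le_mul_of_nonneg_left hc1.le ha
    have t2 : b * (G g2.1 + D g2.2.1) ≤ b * (sInf S2 + ε) := mul_le_mul_of_nonneg_left hc2.le hb
    have e1 : a * (sInf S1 + ε) + b * (sInf S2 + ε) = a * sInf S1 + b * sInf S2 + (a + b) * ε := by ring
    rw [hab, one_mul] at e1
    linarith
  -- conclude
  haveI : Nonempty (Fin m) := ⟨⟨0, hm⟩⟩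
  refine ⟨hXconv, ?_⟩
  intro x hx y hy a b ha hb hab
  rw [hF, hF, hF]
  have hbAbove : ∀ z : T → B → ℝ, BddAbove (Set.range fun s : Fin m => F' z (p s)) :=
    fun z => (Set.finite_range _).bddAbove
  refine ciSup_le fun s => ?_
  calc F' (a • x + b • y) (p s) ≤ a * F' x (p s) + b * F' y (p s) :=
        hF'conv x hx y hy s a b ha hb hab
    _ ≤ a * (⨆ s, F' x (p s)) + b * (⨆ s, F' y (p s)) := by
        gcongr
        · exact le_ciSup (hbAbove x) s
        · exact le_ciSup (hbAbove y) s
    _ = a • (⨆ s, F' x (p s)) + b • (⨆ s, F' y (p s)) := by simp [smul_eq_mul]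
end

section
/- Elimination of simultaneous charging and discharging: let η_in, η_out ∈ (0,1] and let δ^in, δ^out ∈ ℝ^𝒯 satisfy δ^in ≥ 0 and δ^out ≥ 0. Then there exist δ̃^in, δ̃^out ∈ ℝ^𝒯 such that for every t ∈ 𝒯: (i) 0 ≤ δ̃^in_t ≤ δ^in_t and 0 ≤ δ̃^out_t ≤ δ^out_t; (ii) min(δ̃^in_t, δ̃^out_t) = 0 (no simultaneous charge and discharge); (iii) the net energy exchanged with the grid is unchanged, η_out·δ̃^out_t − (1/η_in)·δ̃^in_t = η_out·δ^out_t − (1/η_in)·δ^in_t; and (iv) the stored-energy increment does not decrease, δ̃^in_t − δ̃^out_t ≥ δ^in_t − δ^out_t, with strict inequality at every t at which η_in·η_out < 1 and min(δ^in_t, δ^out_t) > 0. -/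
/-!
Write `κ = ηin * ηout` for the round-trip efficiency. At each time, with charge `a` and
discharge `b`, cancel the smaller flow against the other at exchange rate `κ`: the new charge
is `(a - κ b)⁺` and the new discharge `(b - a / κ)⁺`. This keeps `charge - κ * discharge`, hence
the net grid exchange, fixed, and the stored-energy increment grows by `(1 - κ)` times the
discharge removed.
-/

noncomputable def trimmedCharge (κ a b : ℝ) : ℝ := max (a - κ * b) 0

noncomputable def trimmedDischarge (κ a b : ℝ) : ℝ := max (b - a / κ) 0

section Trimmed

variable {κ a b : ℝ}

theorem trimmedCharge_nonneg : 0 ≤ trimmedCharge κ a b := le_max_right _ _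

theorem trimmedDischarge_nonneg : 0 ≤ trimmedDischarge κ a b := le_max_right _ _

theorem trimmedCharge_le (hκ : 0 ≤ κ) (ha : 0 ≤ a) (hb : 0 ≤ b) : trimmedCharge κ a b ≤ a :=
  max_le (sub_le_self a (mul_nonneg hκ hb)) ha

theorem trimmedDischarge_le (hκ : 0 ≤ κ) (ha : 0 ≤ a) (hb : 0 ≤ b) :
    trimmedDischarge κ a b ≤ b :=
  max_le (sub_le_self b (div_nonneg ha hκ)) hb

theorem trimmedDischarge_lt (hκ : 0 < κ) (ha : 0 < a) (hb : 0 < b) :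
    trimmedDischarge κ a b < b :=
  max_lt (sub_lt_self b (div_pos ha hκ)) hb

theorem min_trimmedCharge_trimmedDischarge (hκ : 0 < κ) :
    min (trimmedCharge κ a b) (trimmedDischarge κ a b) = 0 := by
  unfold trimmedCharge trimmedDischarge
  rcases le_total a (κ * b) with h | h
  · rw [max_eq_right (sub_nonpos.mpr h)]
    exact min_eq_left (le_max_right _ _)
  · rw [max_eq_right (sub_nonpos.mpr ((le_div_iff₀' hκ).mpr h))]
    exact min_eq_right (le_max_right _ _)

theorem trimmedCharge_sub_mul_trimmedDischarge (hκ : 0 < κ) :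
    trimmedCharge κ a b - κ * trimmedDischarge κ a b = a - κ * b := by
  unfold trimmedCharge trimmedDischarge
  rcases le_total a (κ * b) with h | h
  · rw [max_eq_right (sub_nonpos.mpr h), max_eq_left (sub_nonneg.mpr ((div_le_iff₀' hκ).mpr h))]
    field_simp
    ring
  · rw [max_eq_left (sub_nonneg.mpr h), max_eq_right (sub_nonpos.mpr ((le_div_iff₀' hκ).mpr h))]
    ring

theorem trimmedCharge_sub_trimmedDischarge (hκ : 0 < κ) :
    trimmedCharge κ a b - trimmedDischarge κ a b =
      a - b + (1 - κ) * (b - trimmedDischarge κ a b) := by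
  linear_combination trimmedCharge_sub_mul_trimmedDischarge (a := a) (b := b) hκ

end Trimmed

theorem no_simultaneous_charge_discharge_general
    {T : Type*}
    (ηin ηout : ℝ)
    (hηin : ηin ∈ Set.Ioc (0 : ℝ) 1) (hηout : ηout ∈ Set.Ioc (0 : ℝ) 1)
    (δin δout : T → ℝ) (hin : ∀ t, 0 ≤ δin t) (hout : ∀ t, 0 ≤ δout t) :
    ∃ δin' δout' : T → ℝ,
      (∀ t, 0 ≤ δin' t ∧ δin' t ≤ δin t ∧ 0 ≤ δout' t ∧ δout' t ≤ δout t) ∧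
      (∀ t, min (δin' t) (δout' t) = 0) ∧
      (∀ t, ηout * δout' t - (1 / ηin) * δin' t =
        ηout * δout t - (1 / ηin) * δin t) ∧
      (∀ t, δin t - δout t ≤ δin' t - δout' t) ∧
      (∀ t, ηin * ηout < 1 → 0 < min (δin t) (δout t) →
        δin t - δout t < δin' t - δout' t) := by
  obtain ⟨hηin0, hηin1⟩ := hηin
  obtain ⟨hηout0, hηout1⟩ := hηout
  set κ := ηin * ηout
  have hκ : 0 < κ := mul_pos hηin0 hηout0
  have hκ_le : κ ≤ 1 := mul_le_one₀ hηin1 hηout0.le hηout1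
  refine ⟨fun t ↦ trimmedCharge κ (δin t) (δout t), fun t ↦ trimmedDischarge κ (δin t) (δout t),
    fun t ↦ ⟨trimmedCharge_nonneg, trimmedCharge_le hκ.le (hin t) (hout t),
      trimmedDischarge_nonneg, trimmedDischarge_le hκ.le (hin t) (hout t)⟩,
    fun t ↦ min_trimmedCharge_trimmedDischarge hκ, fun t ↦ ?_, fun t ↦ ?_, fun t hκ_lt hpos ↦ ?_⟩
  · have h := trimmedCharge_sub_mul_trimmedDischarge (a := δin t) (b := δout t) hκ
    field_simp
    linear_combination (-1 : ℝ) * h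
  · rw [trimmedCharge_sub_trimmedDischarge hκ]
    exact le_add_of_nonneg_right <| mul_nonneg (sub_nonneg.mpr hκ_le)
      (sub_nonneg.mpr (trimmedDischarge_le hκ.le (hin t) (hout t)))
  · obtain ⟨hin_pos, hout_pos⟩ := lt_min_iff.mp hpos
    rw [trimmedCharge_sub_trimmedDischarge hκ]
    exact lt_add_of_pos_right _ <| mul_pos (sub_pos.mpr hκ_lt)
      (sub_pos.mpr (trimmedDischarge_lt hκ hin_pos hout_pos))

/-- Elimination of simultaneous charging and discharging: any nonnegative
charge/discharge profiles can be replaced by profiles with no simultaneous charge and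
discharge, the same net grid exchange, and a stored-energy increment that does not decrease
(strictly increasing at every time at which `ηin * ηout < 1` and both original profiles are
positive). -/
theorem no_simultaneous_charge_discharge
    {T : Type*} [Fintype T] [Nonempty T]
    (ηin ηout : ℝ)
    (hηin : ηin ∈ Set.Ioc (0 : ℝ) 1) (hηout : ηout ∈ Set.Ioc (0 : ℝ) 1)
    (δin δout : T → ℝ) (hin : ∀ t, 0 ≤ δin t) (hout : ∀ t, 0 ≤ δout t) :
    ∃ δin' δout' : T → ℝ,
      (∀ t, 0 ≤ δin' t ∧ δin' t ≤ δin t ∧ 0 ≤ δout' t ∧ δout' t ≤ δout t) ∧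
      (∀ t, min (δin' t) (δout' t) = 0) ∧
      (∀ t, ηout * δout' t - (1 / ηin) * δin' t =
        ηout * δout t - (1 / ηin) * δin t) ∧
      (∀ t, δin t - δout t ≤ δin' t - δout' t) ∧
      (∀ t, ηin * ηout < 1 → 0 < min (δin t) (δout t) →
        δin t - δout t < δin' t - δout' t) :=
  no_simultaneous_charge_discharge_general ηin ηout hηin hηout δin δout hin hout
end
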